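/- arXiv:1710.10584 — 4 statements merged into one kernel-verified Lean document; each statement's English description precedes it below -/
import Mathlib

section
/- On H_m(𝔹), the row operator M_z : H_m(𝔹)ⁿ → H_m(𝔹), (f_i) ↦ ∑ z_i f_i, satisfies M_z M_z* = ∑_{j=1}^∞ (j/(m+j-1)) P_{ℍ_j}, where P_{ℍ_j} is the orthogonal projection onto the space of homogeneous polynomials of degree j. -/
open scoped InnerProductSpace

set_option synthInstance.maxHeartbeats 400000
set_option maxHeartbeats 800000

instance piLp_completeSpace {H : Type*} [NormedAddCommGroup H] [InnerProductSpace ℂ H]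
    [CompleteSpace H] {n : ℕ} : CompleteSpace (PiLp 2 (fun _ : Fin n => H)) := by
  have e := (PiLp.continuousLinearEquiv 2 ℂ (fun _ : Fin n => H)).symm
  exact (e.isUniformEmbedding.isUniformInducing.completeSpace_congr e.surjective).mp inferInstance

/-- The weight `ρ_m(α) = (m+|α|-1)!/(α!(m-1)!)`. -/
noncomputable def rhoR (m : ℕ) {n : ℕ} (α : Fin n → ℕ) : ℝ :=
  ((m + (∑ i, α i) - 1).factorial : ℝ) /
    ((∏ i, ((α i).factorial : ℝ)) * ((m - 1).factorial : ℝ))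

/-!
Both sides are diagonal in the monomials. From `ρ_m(β) / ρ_m(β - εᵢ) = (m + |β| - 1) / βᵢ` one gets
`M_{zᵢ}* e_β = βᵢ / (m + |β| - 1) • e_{β - εᵢ}`, hence `M_z M_z* e_β = |β| / (m + |β| - 1) • e_β`.
On the other side the `P_j` are mutually orthogonal projections, so by Bessel's inequality
`∑ⱼ cⱼ P_j f` converges for bounded `c`, and `P_j e_β = [|β| = j] e_β` identifies the inner products
of its sum with every `e_β`. Since the monomials span a dense subspace, the two vectors agree.
-/

section InnerProductSpace

variable {ι 𝕜 E : Type*} [RCLike 𝕜] [NormedAddCommGroup E] [InnerProductSpace 𝕜 E]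

theorem eq_of_forall_inner_eq_of_dense_span {v : ι → E}
    (hv : Dense (Submodule.span 𝕜 (Set.range v) : Set E)) {x y : E}
    (h : ∀ i, ⟪v i, x⟫_𝕜 = ⟪v i, y⟫_𝕜) : x = y := by
  refine hv.eq_of_inner_right 𝕜 fun u hu => ?_
  induction hu using Submodule.span_induction with
  | mem u hu => obtain ⟨i, rfl⟩ := hu; exact h i
  | zero => simp
  | add u w _ _ hu hw => simp only [inner_add_left, hu, hw]
  | smul a u _ hu => simp only [inner_smul_left, hu]

theorem IsStarProjection.sum_of_pairwise_mul_eq_zero {R : Type*} [NonUnitalNonAssocSemiring R]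
    [StarRing R] {p : ι → R} (hp : ∀ j, IsStarProjection (p j))
    (hpp : Pairwise fun j k => p j * p k = 0) (s : Finset ι) :
    IsStarProjection (∑ j ∈ s, p j) := by
  classical
  induction s using Finset.induction_on with
  | empty => simp
  | insert j s hj ih =>
    rw [Finset.sum_insert hj]
    refine (hp j).add ih ?_
    rw [Finset.mul_sum]
    exact Finset.sum_eq_zero fun k hk => hpp (ne_of_mem_of_not_mem hk hj).symm

variable [CompleteSpace E]

theorem IsSelfAdjoint.inner_apply_left {A : E →L[𝕜] E} (hA : IsSelfAdjoint A) (x y : E) :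
    ⟪A x, y⟫_𝕜 = ⟪x, A y⟫_𝕜 :=
  hA.isSymmetric x y

theorem IsStarProjection.apply_apply {p : E →L[𝕜] E} (hp : IsStarProjection p) (x : E) :
    p (p x) = p x :=
  congr($(hp.isIdempotentElem.eq) x)

theorem IsStarProjection.norm_sq_apply {p : E →L[𝕜] E} (hp : IsStarProjection p) (x : E) :
    ‖p x‖ ^ 2 = RCLike.re ⟪p x, x⟫_𝕜 := by
  have h : ⟪p x, p x⟫_𝕜 = ⟪p x, x⟫_𝕜 := by
    rw [← hp.isSelfAdjoint.inner_apply_left, hp.apply_apply]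
  rw [norm_sq_eq_re_inner (𝕜 := 𝕜), h]

theorem sum_norm_sq_apply_le_of_pairwise_mul_eq_zero {P : ι → E →L[𝕜] E}
    (hP : ∀ j, IsStarProjection (P j)) (hPP : Pairwise fun j k => P j * P k = 0)
    (s : Finset ι) (x : E) : ∑ j ∈ s, ‖P j x‖ ^ 2 ≤ ‖x‖ ^ 2 := by
  have hQ := IsStarProjection.sum_of_pairwise_mul_eq_zero hP hPP s
  calc ∑ j ∈ s, ‖P j x‖ ^ 2 = ‖(∑ j ∈ s, P j) x‖ ^ 2 := by
        rw [hQ.norm_sq_apply]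
        simp only [(hP _).norm_sq_apply, sum_apply, sum_inner, map_sum]
    _ ≤ (‖∑ j ∈ s, P j‖ * ‖x‖) ^ 2 := by gcongr; exact ContinuousLinearMap.le_opNorm _ _
    _ ≤ ‖x‖ ^ 2 := by
        gcongr
        exact mul_le_of_le_one_left (norm_nonneg _) (hQ.norm_le _)

theorem summable_smul_apply_of_pairwise_mul_eq_zero {P : ι → E →L[𝕜] E}
    (hP : ∀ j, IsStarProjection (P j)) (hPP : Pairwise fun j k => P j * P k = 0)
    {c : ι → 𝕜} {C : ℝ} (hc : ∀ j, ‖c j‖ ≤ C) (x : E) :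
    Summable fun j => c j • P j x := by
  set V : ι → Submodule 𝕜 E := fun j => (P j).range
  have hV : OrthogonalFamily 𝕜 (fun j => V j) fun j => (V j).subtypeₗᵢ := by
    refine OrthogonalFamily.of_pairwise fun j k hjk => ?_
    refine (Submodule.isOrtho_iff_inner_eq ..).mpr ?_
    rintro _ ⟨u, rfl⟩ _ ⟨w, rfl⟩
    simp only [ContinuousLinearMap.coe_coe]
    rw [(hP j).isSelfAdjoint.inner_apply_left, ← mul_apply_eq_comp, hPP hjk,
      zero_apply, inner_zero_right]
  have hsq : Summable fun j => ‖c j • P j x‖ ^ 2 := by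
    refine summable_of_sum_le (c := C ^ 2 * ‖x‖ ^ 2) (fun j => sq_nonneg _) fun s => ?_
    calc ∑ j ∈ s, ‖c j • P j x‖ ^ 2 ≤ ∑ j ∈ s, C ^ 2 * ‖P j x‖ ^ 2 := by
          gcongr with j
          rw [norm_smul, mul_pow]
          gcongr
          exact hc j
      _ ≤ C ^ 2 * ‖x‖ ^ 2 := by
          rw [← Finset.mul_sum]
          gcongr
          exact sum_norm_sq_apply_le_of_pairwise_mul_eq_zero hP hPP s x
  have hmem : ∀ j, c j • P j x ∈ V j := fun j => Submodule.smul_mem _ _ ⟨x, rfl⟩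
  simpa using (hV.summable_iff_norm_sq_summable fun j => ⟨c j • P j x, hmem j⟩).mpr hsq

end InnerProductSpace

section Graded

variable {ι κ 𝕜 E : Type*} [RCLike 𝕜] [NormedAddCommGroup E] [InnerProductSpace 𝕜 E]
  [DecidableEq κ] {e : ι → E} {d : ι → κ} {P : κ → E →L[𝕜] E}

theorem mul_eq_ite_of_apply_eq_ite
    (hdense : Dense (Submodule.span 𝕜 (Set.range e) : Set E))
    (hP : ∀ j a, P j (e a) = if d a = j then e a else 0) (j k : κ) :
    P j * P k = if j = k then P k else 0 := by
  refine ContinuousLinearMap.ext_on hdense ?_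
  rintro _ ⟨a, rfl⟩
  rw [mul_apply_eq_comp, hP k]
  rcases eq_or_ne j k with rfl | hjk
  · by_cases hak : d a = j <;> simp [hP, hak]
  · by_cases hak : d a = k <;> simp [hP, hak, hjk, hjk.symm]

theorem pairwise_mul_eq_zero_of_apply_eq_ite
    (hdense : Dense (Submodule.span 𝕜 (Set.range e) : Set E))
    (hP : ∀ j a, P j (e a) = if d a = j then e a else 0) :
    Pairwise fun j k => P j * P k = 0 :=
  fun j k hjk => by simpa [hjk] using mul_eq_ite_of_apply_eq_ite hdense hP j k

variable [CompleteSpace E]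

theorem isStarProjection_of_apply_eq_ite
    (hdense : Dense (Submodule.span 𝕜 (Set.range e) : Set E))
    (hsa : ∀ j, IsSelfAdjoint (P j)) (hP : ∀ j a, P j (e a) = if d a = j then e a else 0)
    (j : κ) : IsStarProjection (P j) :=
  ⟨(mul_eq_ite_of_apply_eq_ite hdense hP j j).trans (if_pos rfl), hsa j⟩

theorem inner_eq_of_hasSum_smul_apply (hsa : ∀ j, IsSelfAdjoint (P j))
    (hP : ∀ j a, P j (e a) = if d a = j then e a else 0) {c : κ → 𝕜} {x y : E}
    (hy : HasSum (fun j => c j • P j x) y) (a : ι) :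
    ⟪e a, y⟫_𝕜 = c (d a) * ⟪e a, x⟫_𝕜 := by
  have hterm : ∀ j, ⟪e a, c j • P j x⟫_𝕜 = if j = d a then c (d a) * ⟪e a, x⟫_𝕜 else 0 := by
    intro j
    rw [inner_smul_right, ← (hsa j).inner_apply_left, hP]
    rcases eq_or_ne j (d a) with rfl | hj
    · simp
    · simp [hj, Ne.symm hj]
  have h := hy.mapL (innerSL 𝕜 (e a))
  simp only [innerSL_apply_apply, hterm] at h
  exact h.unique (hasSum_ite_eq _ _)

end Graded

theorem adjoint_apply_of_apply_eq_sum {ι 𝕜 E F : Type*} [Fintype ι] [RCLike 𝕜]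
    [NormedAddCommGroup E] [InnerProductSpace 𝕜 E] [CompleteSpace E]
    [NormedAddCommGroup F] [InnerProductSpace 𝕜 F] [CompleteSpace F]
    {R : PiLp 2 (fun _ : ι => E) →L[𝕜] F} {T : ι → E →L[𝕜] F}
    (hR : ∀ f, R f = ∑ i, T i (f i)) (y : F) (i : ι) :
    R.adjoint y i = (T i).adjoint y := by
  classical
  refine ext_inner_left 𝕜 fun x => ?_
  have hsingle : ⟪PiLp.single 2 i x, R.adjoint y⟫_𝕜 = ⟪x, R.adjoint y i⟫_𝕜 := by
    rw [PiLp.inner_apply, Fintype.sum_eq_single i fun j hj => by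
      rw [PiLp.single_eq_of_ne 2 hj, inner_zero_left],
      PiLp.single_eq_same]
  rw [← hsingle, ContinuousLinearMap.adjoint_inner_right, ContinuousLinearMap.adjoint_inner_right,
    hR]
  simp [PiLp.single_apply, apply_ite]

section MultiIndex

variable {ι : Type*} [DecidableEq ι]

theorem sum_add_single [Fintype ι] (α : ι → ℕ) (i : ι) :
    ∑ k, (α + Pi.single i 1 : ι → ℕ) k = ∑ k, α k + 1 := by
  simp [Finset.sum_add_distrib]

theorem prod_factorial_add_single [Fintype ι] (α : ι → ℕ) (i : ι) :
    ∏ k, (((α + Pi.single i 1 : ι → ℕ) k).factorial : ℝ) =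
      (α i + 1) * ∏ k, ((α k).factorial : ℝ) := by
  have hcompl : ∀ k ∈ ({i}ᶜ : Finset ι), (α + Pi.single i 1 : ι → ℕ) k = α k :=
    fun k hk => by simp_all
  rw [Fintype.prod_eq_mul_prod_compl i, Fintype.prod_eq_mul_prod_compl i (fun k => _),
    Finset.prod_congr rfl fun k hk => by rw [hcompl k hk]]
  simp [Nat.factorial_succ]
  ring

theorem sub_single_add_single {β : ι → ℕ} {i : ι} (h : β i ≠ 0) :
    β - Pi.single i 1 + Pi.single i 1 = β := by
  funext k
  rcases eq_or_ne k i with rfl | hk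
  · simp only [Pi.add_apply, Pi.sub_apply, Pi.single_eq_same]
    omega
  · simp [hk]

end MultiIndex

theorem inv_rhoR_add_single {m n : ℕ} (hm : 1 ≤ m) (α : Fin n → ℕ) (i : Fin n) :
    (rhoR m (α + Pi.single i 1))⁻¹ = ((α i : ℝ) + 1) / ((m : ℝ) + ∑ k, α k) * (rhoR m α)⁻¹ := by
  obtain ⟨m, rfl⟩ := Nat.exists_eq_add_of_le' hm
  unfold rhoR
  rw [sum_add_single, prod_factorial_add_single]
  simp only [Nat.add_sub_cancel, show m + 1 + (∑ k, α k + 1) - 1 = m + ∑ k, α k + 1 by omega,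
    show m + 1 + ∑ k, α k - 1 = m + ∑ k, α k by omega, Nat.factorial_succ]
  push_cast
  field_simp
  ring

section Monomial

variable {n m : ℕ} {H : Type*} [NormedAddCommGroup H] [InnerProductSpace ℂ H] [CompleteSpace H]
  {e : (Fin n → ℕ) → H}

-- For `β i = 0` the index `β - Pi.single i 1` is truncated junk, but then the coefficient vanishes.
theorem adjoint_apply_monomial (hm : 1 ≤ m)
    (horth : ∀ α β, ⟪e α, e β⟫_ℂ = if α = β then ((rhoR m α)⁻¹ : ℂ) else 0)
    (hdense : Dense (Submodule.span ℂ (Set.range e) : Set H)) {T : H →L[ℂ] H} {i : Fin n}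
    (hT : ∀ α, T (e α) = e (α + Pi.single i 1)) (β : Fin n → ℕ) :
    T.adjoint (e β) =
      ((β i : ℂ) / ((m : ℂ) + (∑ k, β k : ℕ) - 1)) • e (β - Pi.single i 1) := by
  refine eq_of_forall_inner_eq_of_dense_span hdense fun γ => ?_
  rw [ContinuousLinearMap.adjoint_inner_right, hT, inner_smul_right, horth, horth]
  by_cases hγ : γ + Pi.single i 1 = β
  · subst hγ
    rw [if_pos rfl, if_pos (add_tsub_cancel_right _ _).symm, sum_add_single,
      ← Complex.ofReal_inv, inv_rhoR_add_single hm]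
    simp only [Pi.add_apply, Pi.single_eq_same]
    push_cast
    ring
  · rw [if_neg hγ]
    by_cases hβ : β i = 0
    · simp [hβ]
    · rw [if_neg fun h => hγ (by rw [h, sub_single_add_single hβ]), mul_zero]

theorem apply_adjoint_apply_monomial (hm : 1 ≤ m)
    (horth : ∀ α β, ⟪e α, e β⟫_ℂ = if α = β then ((rhoR m α)⁻¹ : ℂ) else 0)
    (hdense : Dense (Submodule.span ℂ (Set.range e) : Set H)) {T : H →L[ℂ] H} {i : Fin n}
    (hT : ∀ α, T (e α) = e (α + Pi.single i 1)) (β : Fin n → ℕ) :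
    T (T.adjoint (e β)) = ((β i : ℂ) / ((m : ℂ) + (∑ k, β k : ℕ) - 1)) • e β := by
  rw [adjoint_apply_monomial hm horth hdense hT, map_smul, hT]
  rcases eq_or_ne (β i) 0 with h | h
  · simp [h]
  · rw [sub_single_add_single h]

theorem row_apply_adjoint_apply_monomial (hm : 1 ≤ m)
    (horth : ∀ α β, ⟪e α, e β⟫_ℂ = if α = β then ((rhoR m α)⁻¹ : ℂ) else 0)
    (hdense : Dense (Submodule.span ℂ (Set.range e) : Set H)) {T : Fin n → H →L[ℂ] H}
    (hT : ∀ i α, T i (e α) = e (α + Pi.single i 1))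
    {R : PiLp 2 (fun _ : Fin n => H) →L[ℂ] H} (hR : ∀ f, R f = ∑ i, T i (f i))
    (β : Fin n → ℕ) :
    R (R.adjoint (e β)) =
      (((∑ k, β k : ℕ) : ℂ) / ((m : ℂ) + (∑ k, β k : ℕ) - 1)) • e β := by
  simp only [hR, adjoint_apply_of_apply_eq_sum hR,
    apply_adjoint_apply_monomial hm horth hdense (hT _), ← Finset.sum_smul, ← Finset.sum_div]
  push_cast
  rfl

end Monomial

theorem norm_natCast_div_add_sub_one_le_one {m : ℕ} (hm : 1 ≤ m) (j : ℕ) :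
    ‖(j : ℂ) / ((m : ℂ) + j - 1)‖ ≤ 1 := by
  have hcast : (m : ℂ) + j - 1 = ((m + j - 1 : ℕ) : ℂ) := by
    push_cast [Nat.cast_sub (by omega : 1 ≤ m + j)]
    ring
  rw [hcast, norm_div, Complex.norm_natCast, Complex.norm_natCast]
  exact div_le_one_of_le₀ (by exact_mod_cast (by omega : j ≤ m + j - 1)) (Nat.cast_nonneg _)

/-- On `H_m(𝔹)` — modelled abstractly as a Hilbert space `H` with an orthogonal family
`e α` of monomials satisfying `⟪e α, e β⟫ = δ_{αβ}/ρ_m(α)` and having dense span — the row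
operator `M_z : H_m(𝔹)ⁿ → H_m(𝔹)`, `(f_i) ↦ ∑ z_i f_i`, satisfies
`M_z M_z* = ∑_{j=1}^∞ (j/(m+j-1)) P_{ℍ_j}`, where `P_{ℍ_j}` is the orthogonal projection
onto the homogeneous polynomials of degree `j`.  (The `j = 0` summand vanishes.) -/
theorem row_op_identity (n m : ℕ) (hm : 1 ≤ m)
    {H : Type*} [NormedAddCommGroup H] [InnerProductSpace ℂ H] [CompleteSpace H]
    (e : (Fin n → ℕ) → H)
    (horth : ∀ α β, ⟪e α, e β⟫_ℂ = if α = β then ((rhoR m α)⁻¹ : ℂ) else 0)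
    (hdense : Dense ((Submodule.span ℂ (Set.range e) : Submodule ℂ H) : Set H))
    (Mz : Fin n → H →L[ℂ] H)
    (hMz : ∀ i α, Mz i (e α) = e (α + Pi.single i 1))
    (Mrow : PiLp 2 (fun _ : Fin n => H) →L[ℂ] H)
    (hMrow : ∀ f, Mrow f = ∑ i, Mz i (f i))
    (P : ℕ → H →L[ℂ] H)
    (hPsa : ∀ j, IsSelfAdjoint (P j))
    (hP : ∀ j α, P j (e α) = if (∑ i, α i) = j then e α else 0) :
    ∀ f : H,
      HasSum (fun j : ℕ => ((j : ℂ) / ((m : ℂ) + j - 1)) • P j f)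
        (Mrow ((Mrow).adjoint f)) := by
  intro f
  obtain ⟨L, hL⟩ := summable_smul_apply_of_pairwise_mul_eq_zero
    (isStarProjection_of_apply_eq_ite hdense hPsa hP)
    (pairwise_mul_eq_zero_of_apply_eq_ite hdense hP) (norm_natCast_div_add_sub_one_le_one hm) f
  suffices Mrow (Mrow.adjoint f) = L by rwa [this]
  refine eq_of_forall_inner_eq_of_dense_span hdense fun β => ?_
  rw [inner_eq_of_hasSum_smul_apply hPsa hP hL, ← ContinuousLinearMap.adjoint_inner_left,
    ContinuousLinearMap.adjoint_inner_right,
    row_apply_adjoint_apply_monomial hm horth hdense hMz hMrow, inner_smul_left]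
  simp [map_div₀]
end

section
/- On H_m(𝔹), the diagonal operator Δ defined by Δf_k = ((m+k)/(k+1)) f_k on homogeneous polynomials of degree k admits the representation Δ = ∑_{j=0}^{m-1} (-1)^j C(m, j+1) σ_{M_z}^j(1), where σ_{M_z}(X) = ∑_{i=1}^n M_{z_i} X M_{z_i}* and σ_{M_z}^j denotes the j-fold iterate applied to the identity operator. -/
lemma Dzero (M : ℕ) : ∀ k : ℕ, ∑ l ∈ Finset.range (M+2),
    (-1:ℤ)^l * ((M+1).choose l : ℤ) * ((k + (M+1-l)).choose M : ℤ) = 0 := by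
  induction M with
  | zero =>
    intro k
    simp [Finset.sum_range_succ]
  | succ M ih =>
    intro k
    have hglue : ∑ l ∈ Finset.range (M+2),
        (-1:ℤ)^l * ((M+1).choose l : ℤ) * ((k + (M+2-l)).choose (M+1) : ℤ)
        = ((k + (M+2)).choose (M+1) : ℤ)
          + ∑ l ∈ Finset.range (M+1),
            (-1:ℤ)^(l+1) * ((M+1).choose (l+1) : ℤ) * ((k + (M+1-l)).choose (M+1) : ℤ) := by
      rw [Finset.sum_range_succ']
      have : ∀ l, M+2-(l+1) = M+1-l := fun l => by omega
      simp only [this]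
      simp [add_comm]
    have hsplit : ∑ l ∈ Finset.range (M+3),
        (-1:ℤ)^l * ((M+2).choose l : ℤ) * ((k + (M+2-l)).choose (M+1) : ℤ)
        = (∑ l ∈ Finset.range (M+2),
            (-1:ℤ)^(l+1) * ((M+1).choose l : ℤ) * ((k + (M+1-l)).choose (M+1) : ℤ))
          + (∑ l ∈ Finset.range (M+2),
            (-1:ℤ)^(l+1) * ((M+1).choose (l+1) : ℤ) * ((k + (M+1-l)).choose (M+1) : ℤ))
          + ((k + (M+2)).choose (M+1) : ℤ) := by
      rw [Finset.sum_range_succ']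
      rw [← Finset.sum_add_distrib]
      congr 1
      · apply Finset.sum_congr rfl
        intro l hl
        have h1 : M+2-(l+1) = M+1-l := by omega
        rw [h1, Nat.choose_succ_succ (M+1) l]
        push_cast
        ring
      · norm_num
    -- the extra last term of second sum vanishes
    have hlast : ∑ l ∈ Finset.range (M+2),
        (-1:ℤ)^(l+1) * ((M+1).choose (l+1) : ℤ) * ((k + (M+1-l)).choose (M+1) : ℤ)
        = ∑ l ∈ Finset.range (M+1),
        (-1:ℤ)^(l+1) * ((M+1).choose (l+1) : ℤ) * ((k + (M+1-l)).choose (M+1) : ℤ) := by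
      rw [Finset.sum_range_succ]
      simp [Nat.choose_eq_zero_of_lt]
    rw [hsplit, hlast]
    have hpascal : ∑ l ∈ Finset.range (M+2),
        (-1:ℤ)^(l+1) * ((M+1).choose l : ℤ) * ((k + (M+1-l)).choose (M+1) : ℤ)
        + ∑ l ∈ Finset.range (M+2),
        (-1:ℤ)^l * ((M+1).choose l : ℤ) * ((k + (M+2-l)).choose (M+1) : ℤ)
        = ∑ l ∈ Finset.range (M+2),
        (-1:ℤ)^l * ((M+1).choose l : ℤ) * ((k + (M+1-l)).choose M : ℤ) := by
      rw [← Finset.sum_add_distrib]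
      apply Finset.sum_congr rfl
      intro l hl
      rw [Finset.mem_range] at hl
      have h1 : k + (M+2-l) = (k + (M+1-l)) + 1 := by omega
      rw [h1, Nat.choose_succ_succ' (k + (M+1-l)) M]
      push_cast
      ring
    linarith [hglue, hpascal, ih k]

lemma div_helper' {K : Type*} [Field K] (x y a b c : K) (hb : b ≠ 0) (hc : c ≠ 0)
    (hy : y ≠ 0) (h : b * y = c * x) : (x / y) * (a / b) = a / c := by
  field_simp
  linear_combination (-a) * h

noncomputable def lamC (M : ℕ) : ℕ → ℕ → ℂ
  | 0, _ => 1
  | (j+1), k => ((k : ℂ) / ((M : ℂ) + k)) * lamC M j (k-1)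

lemma lamC_eq (M : ℕ) : ∀ j k, j ≤ M →
    lamC M j k = (((k + (M-j)).choose M : ℕ) : ℂ) / (((k + M).choose M : ℕ) : ℂ) := by
  intro j
  induction j with
  | zero =>
    intro k _
    have h1 : ((k + M).choose M : ℂ) ≠ 0 :=
      Nat.cast_ne_zero.2 (Nat.choose_pos (by omega)).ne'
    simp [lamC, div_self h1]
  | succ j ih =>
    intro k hj
    cases k with
    | zero =>
      have h0 : (M - (j+1)).choose M = 0 := Nat.choose_eq_zero_of_lt (by omega)
      simp [lamC, h0]
    | succ k' =>
      rw [lamC, show (k'+1) - 1 = k' from rfl, ih k' (by omega)]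
      have hnum : k' + (M - j) = (k' + 1) + (M - (j+1)) := by omega
      have hkey : (k'+M).choose M * (k'+M+1) = (k'+1+M).choose M * (k'+1) := by
        have h := Nat.choose_mul_succ_eq (k'+M) M
        rw [show k'+M+1-M = k'+1 by omega] at h
        rw [show k'+1+M = k'+M+1 by omega]
        exact h
      have h1 : (((k'+M).choose M : ℕ) : ℂ) ≠ 0 :=
        Nat.cast_ne_zero.2 (Nat.choose_pos (by omega)).ne'
      have h2 : (((k'+1+M).choose M : ℕ) : ℂ) ≠ 0 :=
        Nat.cast_ne_zero.2 (Nat.choose_pos (by omega)).ne'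
      have h3 : ((M:ℂ) + ((k':ℂ)+1)) ≠ 0 := by
        have : (((M+k'+1 : ℕ)) : ℂ) ≠ 0 := Nat.cast_ne_zero.2 (by omega)
        push_cast at this
        intro hc; apply this; rw [← hc]; ring
      rw [hnum]
      have hkey2 : (k'+M).choose M * (M+(k'+1)) = (k'+1+M).choose M * (k'+1) := by
        rw [show M+(k'+1) = k'+M+1 by omega]; exact hkey
      have hkeyC : (((k'+M).choose M : ℕ) : ℂ) * ((M:ℂ) + (((k'+1:ℕ)) : ℂ))
          = (((k'+1+M).choose M : ℕ) : ℂ) * (((k'+1:ℕ)) : ℂ) := by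
        exact_mod_cast congrArg (Nat.cast : ℕ → ℂ) hkey2
      have h3' : ((M:ℂ) + (((k'+1:ℕ)):ℂ)) ≠ 0 := by
        push_cast at h3 ⊢; exact h3
      exact div_helper' _ _ _ _ _ h1 h2 h3' hkeyC

lemma sum_lamC (M : ℕ) (k : ℕ) :
    ∑ j ∈ Finset.range (M+1), (-1:ℂ)^j * (((M+1).choose (j+1) : ℕ) : ℂ) * lamC M j k
    = (((M:ℂ)+1) + k) / ((k:ℂ)+1) := by
  have hnum : (∑ j ∈ Finset.range (M+1),
      (-1:ℤ)^j * ((M+1).choose (j+1) : ℤ) * ((k + (M-j)).choose M : ℤ))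
      = ((k+M+1).choose M : ℤ) := by
    have h := Dzero M k
    rw [Finset.sum_range_succ'] at h
    have h2 : ∀ l : ℕ, M+1-(l+1) = M-l := fun l => by omega
    simp only [h2] at h
    simp only [pow_zero, Nat.choose_zero_right, Nat.cast_one, one_mul, mul_one,
      Nat.sub_zero, pow_succ] at h
    have h3 : k + (M+1) = k + M + 1 := by omega
    rw [h3] at h
    have h4 : ∑ j ∈ Finset.range (M+1),
        (-1:ℤ)^j * ((M+1).choose (j+1) : ℤ) * ((k + (M-j)).choose M : ℤ)
        = -∑ l ∈ Finset.range (M+1),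
          (-1:ℤ)^l * (-1) * ((M+1).choose (l+1) : ℤ) * ((k + (M-l)).choose M : ℤ) := by
      rw [← Finset.sum_neg_distrib]
      apply Finset.sum_congr rfl
      intro l _
      ring
    rw [h4]
    linarith [h]
  have hD : (((k + M).choose M : ℕ) : ℂ) ≠ 0 :=
    Nat.cast_ne_zero.2 (Nat.choose_pos (by omega)).ne'
  have hk1 : ((k:ℂ)+1) ≠ 0 := by
    have : (((k+1 : ℕ)) : ℂ) ≠ 0 := Nat.cast_ne_zero.2 (by omega)
    push_cast at this
    exact this
  calc ∑ j ∈ Finset.range (M+1), (-1:ℂ)^j * (((M+1).choose (j+1) : ℕ) : ℂ) * lamC M j k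
      = ∑ j ∈ Finset.range (M+1), ((-1:ℂ)^j * (((M+1).choose (j+1) : ℕ) : ℂ)
          * (((k + (M-j)).choose M : ℕ) : ℂ)) / (((k + M).choose M : ℕ) : ℂ) := by
        apply Finset.sum_congr rfl
        intro j hj
        rw [lamC_eq M j k (by simpa using Nat.lt_succ_iff.mp (Finset.mem_range.mp hj))]
        ring
    _ = (((k+M+1).choose M : ℕ) : ℂ) / (((k + M).choose M : ℕ) : ℂ) := by
        rw [← Finset.sum_div]
        congr 1
        have := congrArg (Int.cast : ℤ → ℂ) hnum
        push_cast at this ⊢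
        convert this using 2
    _ = (((M:ℂ)+1) + k) / ((k:ℂ)+1) := by
        have hkey : (k+M).choose M * (k+M+1) = (k+M+1).choose M * (k+1) := by
          have h := Nat.choose_mul_succ_eq (k+M) M
          rw [show k+M+1-M = k+1 by omega] at h
          exact h
        have hkeyC : (((k+M).choose M : ℕ) : ℂ) * ((k:ℂ)+M+1)
            = (((k+M+1).choose M : ℕ) : ℂ) * ((k:ℂ)+1) := by
          exact_mod_cast congrArg (Nat.cast : ℕ → ℂ) hkey
        field_simp
        linear_combination (-1 : ℂ) * hkeyC



open scoped InnerProductSpace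

set_option synthInstance.maxHeartbeats 400000
set_option maxHeartbeats 800000

/-- `σ_{M_z}(X) = ∑ i, M_{z_i} X M_{z_i}*`. -/
noncomputable def sigmaOp {n : ℕ} {H : Type*} [NormedAddCommGroup H]
    [InnerProductSpace ℂ H] [CompleteSpace H]
    (Mz : Fin n → H →L[ℂ] H) (X : H →L[ℂ] H) : H →L[ℂ] H :=
  ∑ i, (Mz i).comp (X.comp ((Mz i).adjoint))

/-- On `H_m(𝔹)` — modelled abstractly as a Hilbert space `H` with an orthogonal monomial
family `e α` with dense span — the diagonal operator `Δ` acting as `(m+k)/(k+1)` on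
homogeneous elements of degree `k` admits the representation
`Δ = ∑_{j=0}^{m-1} (-1)^j C(m,j+1) σ_{M_z}^j(1)`, where `σ_{M_z}(X) = ∑ i, M_{z_i} X M_{z_i}*`. -/
theorem delta_representation (n m : ℕ) (hm : 1 ≤ m)
    {H : Type*} [NormedAddCommGroup H] [InnerProductSpace ℂ H] [CompleteSpace H]
    (e : (Fin n → ℕ) → H)
    (horth : ∀ α β, ⟪e α, e β⟫_ℂ = if α = β then ((rhoR m α)⁻¹ : ℂ) else 0)
    (hdense : Dense ((Submodule.span ℂ (Set.range e) : Submodule ℂ H) : Set H))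
    (Mz : Fin n → H →L[ℂ] H)
    (hMz : ∀ i α, Mz i (e α) = e (α + Pi.single i 1))
    (Δ : H →L[ℂ] H)
    (hΔ : ∀ α, Δ (e α) = (((m : ℂ) + (∑ i, α i)) / (((∑ i, α i : ℕ) : ℂ) + 1)) • e α) :
    Δ = ∑ j ∈ Finset.range m,
        ((-1 : ℂ) ^ j * (m.choose (j + 1) : ℂ)) • (sigmaOp Mz)^[j] 1 := by
  obtain ⟨M, rfl⟩ : ∃ M, m = M + 1 := ⟨m - 1, by omega⟩
  have hzero : ∀ x : H, (∀ β, ⟪x, e β⟫_ℂ = 0) → x = 0 := by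
    intro x hx
    have h1 : ∀ y ∈ (Submodule.span ℂ (Set.range e) : Submodule ℂ H), ⟪x, y⟫_ℂ = 0 := by
      intro y hy
      induction hy using Submodule.span_induction with
      | mem y hy => obtain ⟨β, rfl⟩ := hy; exact hx β
      | zero => simp
      | add u v hu hv hu' hv' => rw [inner_add_right, hu', hv']; ring
      | smul c u hu hu' => rw [inner_smul_right, hu']; ring
    have hc : Continuous fun y : H => ⟪x, y⟫_ℂ := continuous_const.inner continuous_id
    have hfun : (fun y : H => ⟪x, y⟫_ℂ) = (fun _ : H => (0:ℂ)) :=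
      Continuous.ext_on hdense hc continuous_const (fun y hy => h1 y hy)
    have := congrFun hfun x
    simpa [inner_self_eq_zero] using this
  have hsum_sub : ∀ (α : Fin n → ℕ) (i : Fin n), 1 ≤ α i →
      (α - Pi.single i 1) + Pi.single i 1 = α := by
    intro α i h; funext t
    by_cases ht : t = i
    · subst ht
      simp only [Pi.add_apply, Pi.sub_apply, Pi.single_eq_same]
      omega
    · simp only [Pi.add_apply, Pi.sub_apply, Pi.single_eq_of_ne ht]
      omega
  have hdeg_sub : ∀ (α : Fin n → ℕ) (i : Fin n), 1 ≤ α i →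
      (∑ t, (α - Pi.single i 1 : Fin n → ℕ) t) = (∑ t, α t) - 1 := by
    intro α i h
    have h2 : ∑ t, (α - Pi.single i 1 : Fin n → ℕ) t + ∑ t, (Pi.single i 1 : Fin n → ℕ) t = ∑ t, α t := by
      rw [← Finset.sum_add_distrib]
      apply Finset.sum_congr rfl
      intro t _
      have := congrFun (hsum_sub α i h) t
      simpa using this
    have h3 : ∑ t, (Pi.single i 1 : Fin n → ℕ) t = 1 := by
      simp [Finset.sum_pi_single]
    omega
  have hratioR : ∀ (α : Fin n → ℕ) (i : Fin n), 1 ≤ α i →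
      ((α i : ℝ) / ((M:ℝ) + ((∑ t, α t : ℕ) : ℝ))) * (rhoR (M+1) (α - Pi.single i 1))⁻¹
      = (rhoR (M+1) α)⁻¹ := by
    intro α i hi
    set k := ∑ t, α t with hk
    have hk1 : 1 ≤ k := le_trans hi (Finset.single_le_sum
      (f := fun t => α t) (fun _ _ => Nat.zero_le _) (Finset.mem_univ i))
    have hsd : (∑ t, (α - Pi.single i 1 : Fin n → ℕ) t) = k - 1 := hdeg_sub α i hi
    have hprod : (∏ t, ((α t).factorial : ℝ))
        = (α i : ℝ) * ∏ t, (((α - Pi.single i 1 : Fin n → ℕ) t).factorial : ℝ) := by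
      have hL := (Finset.mul_prod_erase Finset.univ (fun t => ((α t).factorial : ℝ))
        (Finset.mem_univ i)).symm
      have hR := (Finset.mul_prod_erase Finset.univ
        (fun t => (((α - Pi.single i 1 : Fin n → ℕ) t).factorial : ℝ))
        (Finset.mem_univ i)).symm
      rw [hL, hR]
      have herase : ∏ t ∈ Finset.univ.erase i, ((α t).factorial : ℝ)
          = ∏ t ∈ Finset.univ.erase i,
            (((α - Pi.single i 1 : Fin n → ℕ) t).factorial : ℝ) := by
        apply Finset.prod_congr rfl
        intro t ht
        have htne : t ≠ i := (Finset.mem_erase.mp ht).1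
        have : (α - Pi.single i 1 : Fin n → ℕ) t = α t := by
          simp [Pi.sub_apply, Pi.single_eq_of_ne htne]
        rw [this]
      have hfact : ((α i).factorial : ℝ)
          = (α i : ℝ) * (((α - Pi.single i 1 : Fin n → ℕ) i).factorial : ℝ) := by
        have h1 : (α - Pi.single i 1 : Fin n → ℕ) i = α i - 1 := by
          simp [Pi.sub_apply, Pi.single_eq_same]
        rw [h1]
        obtain ⟨a, ha⟩ : ∃ a, α i = a + 1 := ⟨α i - 1, by omega⟩
        rw [ha]
        simp [Nat.factorial_succ]
        try push_cast
        try ring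
      rw [herase, hfact]
      ring
    have hfac2 : (((M+1) + k - 1).factorial : ℝ)
        = ((M:ℝ) + (k:ℝ)) * (((M+1) + (k-1) - 1).factorial : ℝ) := by
      have e1 : (M+1) + k - 1 = (M + (k-1)) + 1 := by omega
      have e2 : (M+1) + (k-1) - 1 = M + (k-1) := by omega
      rw [e1, e2, Nat.factorial_succ]
      push_cast [Nat.cast_sub hk1]
      ring
    unfold rhoR
    rw [hsd, hprod, hfac2]
    have n1 : (((M+1) + (k-1) - 1).factorial : ℝ) ≠ 0 := by
      exact_mod_cast (Nat.factorial_pos _).ne'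
    have n2 : ((M:ℝ) + (k:ℝ)) ≠ 0 := by positivity
    have n3 : (∏ t, (((α - Pi.single i 1 : Fin n → ℕ) t).factorial : ℝ)) ≠ 0 := by
      apply ne_of_gt
      apply Finset.prod_pos
      intro t _
      exact_mod_cast Nat.factorial_pos _
    have n4 : (((M+1) - 1).factorial : ℝ) ≠ 0 := by
      exact_mod_cast (Nat.factorial_pos _).ne'
    have n5 : (α i : ℝ) ≠ 0 := by
      have : 0 < α i := hi
      positivity
    have hkcast : ((M:ℝ) + ((k:ℕ):ℝ)) = (M:ℝ) + (k:ℝ) := rfl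
    field_simp
  have hratio : ∀ (α : Fin n → ℕ) (i : Fin n), 1 ≤ α i →
      (((α i : ℕ):ℂ) / ((M:ℂ) + ((∑ t, α t : ℕ):ℂ)))
        * (((rhoR (M+1) (α - Pi.single i 1) : ℝ)) : ℂ)⁻¹
      = (((rhoR (M+1) α : ℝ)) : ℂ)⁻¹ := by
    intro α i hi
    have h := congrArg (fun x : ℝ => (x : ℂ)) (hratioR α i hi)
    push_cast at h ⊢
    exact h
  have hadj : ∀ (i : Fin n) (α : Fin n → ℕ), (Mz i).adjoint (e α)
      = ((((α i : ℕ)) : ℂ) / ((M:ℂ) + ((∑ t, α t : ℕ) : ℂ))) • e (α - Pi.single i 1) := by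
    intro i α
    rw [← sub_eq_zero]
    apply hzero
    intro β
    rw [inner_sub_left, ContinuousLinearMap.adjoint_inner_left, hMz, horth,
      inner_smul_left, horth]
    have hconj : (starRingEnd ℂ) ((((α i : ℕ)):ℂ) / ((M:ℂ) + ((∑ t, α t : ℕ):ℂ)))
        = (((α i : ℕ)):ℂ) / ((M:ℂ) + ((∑ t, α t : ℕ):ℂ)) := by
      simp [map_div₀]
    rw [hconj]
    by_cases h0 : α i = 0
    · have hne : α ≠ β + Pi.single i 1 := by
        intro hc
        have := congrFun hc i
        simp only [Pi.add_apply, Pi.single_eq_same] at this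
        omega
      rw [if_neg hne, h0]
      simp
    · by_cases hb : α - Pi.single i 1 = β
      · rw [← hb, if_pos (hsum_sub α i (by omega)).symm, if_pos rfl, sub_eq_zero]
        exact (hratio α i (by omega)).symm
      · have hne : α ≠ β + Pi.single i 1 := by
          intro hc
          apply hb
          funext t
          have h2 := congrFun hc t
          by_cases ht : t = i
          · subst ht
            simp only [Pi.add_apply, Pi.single_eq_same] at h2
            simp only [Pi.sub_apply, Pi.single_eq_same]
            omega
          · simp only [Pi.add_apply, Pi.single_eq_of_ne ht] at h2
            simp only [Pi.sub_apply, Pi.single_eq_of_ne ht]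
            omega
        rw [if_neg hne, if_neg hb]
        simp
  have hsig : ∀ (j : ℕ) (α : Fin n → ℕ),
      ((sigmaOp Mz)^[j] (1 : H →L[ℂ] H)) (e α) = lamC M j (∑ t, α t) • e α := by
    intro j
    induction j with
    | zero => intro α; simp [lamC]
    | succ j ih =>
      intro α
      rw [Function.iterate_succ_apply']
      have hexp : (sigmaOp Mz ((sigmaOp Mz)^[j] 1)) (e α)
          = ∑ i, (Mz i) (((sigmaOp Mz)^[j] 1) ((Mz i).adjoint (e α))) := by
        simp [sigmaOp, ContinuousLinearMap.sum_apply, ContinuousLinearMap.comp_apply]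
      rw [hexp]
      have hterm : ∀ i : Fin n, (Mz i) (((sigmaOp Mz)^[j] 1) ((Mz i).adjoint (e α)))
          = (((α i : ℕ):ℂ) / ((M:ℂ) + ((∑ t, α t : ℕ):ℂ))
              * lamC M j ((∑ t, α t) - 1)) • e α := by
        intro i
        rw [hadj i α]
        by_cases h0 : α i = 0
        · rw [h0]
          simp
        · rw [map_smul, ih, map_smul, map_smul, hMz, hdeg_sub α i (by omega),
            hsum_sub α i (by omega), smul_smul]
      rw [Finset.sum_congr rfl (fun i _ => hterm i), ← Finset.sum_smul]
      congr 1
      rw [← Finset.sum_mul, ← Finset.sum_div]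
      have hsc : (∑ i, ((α i : ℕ) : ℂ)) = (((∑ t, α t : ℕ)) : ℂ) := by
        push_cast
        rfl
      rw [hsc]
      rfl
  apply ContinuousLinearMap.ext_on hdense
  rintro x ⟨α, rfl⟩
  rw [hΔ α]
  have happ : (∑ j ∈ Finset.range (M+1),
        ((-1:ℂ)^j * (((M+1).choose (j+1)) : ℂ)) • (sigmaOp Mz)^[j] (1 : H →L[ℂ] H)) (e α)
      = ∑ j ∈ Finset.range (M+1),
        ((-1:ℂ)^j * (((M+1).choose (j+1)) : ℂ) * lamC M j (∑ t, α t)) • e α := by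
    rw [ContinuousLinearMap.sum_apply]
    refine Finset.sum_congr rfl (fun j _ => ?_)
    rw [ContinuousLinearMap.smul_apply, hsig j α, smul_smul]
  rw [happ, ← Finset.sum_smul, sum_lamC M (∑ t, α t)]
  congr 1
  push_cast
  ring
end

section
/- The eigenvalue identity underlying the representation of Δ: for every integer m ≥ 1 and k ≥ 0, ∑_{j=0}^{min(m-1,k)} (-1)^j C(m, j+1) · ∏_{l=0}^{j-1} ((k-l)/(m+k-l-1)) = (m+k)/(k+1). -/
/-- The eigenvalue identity underlying the representation of `Δ`: for integers `m ≥ 1` and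
`k ≥ 0`, `∑_{j=0}^{min(m-1,k)} (-1)^j C(m,j+1) ∏_{l=0}^{j-1} ((k-l)/(m+k-l-1)) = (m+k)/(k+1)`
(empty products are `1`). -/
theorem delta_eigenvalue_identity (m k : ℕ) (hm : 1 ≤ m) :
    (∑ j ∈ Finset.range (min (m - 1) k + 1),
        (-1 : ℚ) ^ j * (m.choose (j + 1) : ℚ) *
          ∏ l ∈ Finset.range j, (((k - l : ℕ) : ℚ) / ((m + k - l - 1 : ℕ) : ℚ))) =
      ((m : ℚ) + k) / ((k : ℚ) + 1) := by
  have hkz : ((k : ℚ) + 1) ≠ 0 := by positivity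
  rcases Nat.lt_or_ge m 2 with hm2 | hm2
  · -- m = 1
    interval_cases m
    simp only [Nat.sub_self, Nat.zero_min, Nat.zero_add, Finset.sum_range_one,
      pow_zero, Nat.choose_self, Nat.cast_one, Finset.range_zero, Finset.prod_empty,
      mul_one, one_mul]
    rw [eq_div_iff hkz]
    push_cast
    ring
  · obtain ⟨M, rfl⟩ : ∃ M, m = M + 2 := ⟨m - 2, by omega⟩
    set P : ℕ → ℚ := fun n => ∏ l ∈ Finset.range n,
      (((k - l : ℕ) : ℚ) / ((M + 2 + k - l - 1 : ℕ) : ℚ)) with hP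
    set G : ℕ → ℚ := fun n =>
      ((M : ℚ) + 2 + k) / ((k : ℚ) + 1) -
        (-1 : ℚ) ^ n * (((M + 1).choose n : ℕ) : ℚ) * P n *
          ((M + 2 + k - n : ℕ) : ℚ) / ((k : ℚ) + 1) with hG
    have key : ∀ n, n ≤ min (M + 1) k + 1 →
        (∑ j ∈ Finset.range n,
          (-1 : ℚ) ^ j * (((M + 2).choose (j + 1) : ℕ) : ℚ) * P j) = G n := by
      intro n
      induction n with
      | zero =>
        intro _
        simp only [Finset.sum_range_zero, hG, hP]
        simp only [pow_zero, Nat.choose_zero_right, Nat.cast_one, Finset.range_zero,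
          Finset.prod_empty, mul_one, one_mul, Nat.sub_zero]
        push_cast
        ring
      | succ n ih =>
        intro hn
        have hnM : n ≤ M + 1 := by omega
        have hnk : n ≤ k := by omega
        rw [Finset.sum_range_succ, ih (by omega)]
        -- cast facts
        have hck : ((k - n : ℕ) : ℚ) = (k : ℚ) - n := by
          rw [Nat.cast_sub hnk]
        have hd : ((M + 2 + k - n - 1 : ℕ) : ℚ) = (M : ℚ) + 1 + k - n := by
          have h1 : (M + 2 + k - n - 1 : ℕ) = (M + 1 + k) - n := by omega
          rw [h1, Nat.cast_sub (by omega)]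
          push_cast; ring
        have hmn : ((M + 2 + k - n : ℕ) : ℚ) = (M : ℚ) + 2 + k - n := by
          rw [Nat.cast_sub (by omega)]
          push_cast; ring
        have hmn1 : ((M + 2 + k - (n + 1) : ℕ) : ℚ) = (M : ℚ) + 1 + k - n := by
          have h1 : (M + 2 + k - (n + 1) : ℕ) = (M + 1 + k) - n := by omega
          rw [h1, Nat.cast_sub (by omega)]
          push_cast; ring
        have hdz : (M : ℚ) + 1 + k - n ≠ 0 := by
          have : (n : ℚ) ≤ k := by exact_mod_cast hnk
          nlinarith
        have hc : (((M + 2).choose (n + 1) : ℕ) : ℚ) =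
            (((M + 1).choose n : ℕ) : ℚ) + (((M + 1).choose (n + 1) : ℕ) : ℚ) := by
          rw [show M + 2 = (M + 1) + 1 from rfl, Nat.choose_succ_succ]
          push_cast; ring
        have hb : (((M + 1).choose (n + 1) : ℕ) : ℚ) =
            (((M + 1).choose n : ℕ) : ℚ) * ((M : ℚ) + 1 - n) / ((n : ℚ) + 1) := by
          have h0 := Nat.choose_succ_right_eq (M + 1) n
          have h2 : ((M + 1 - n : ℕ) : ℚ) = (M : ℚ) + 1 - n := by
            rw [Nat.cast_sub hnM]; push_cast; ring
          have h1 : (((M + 1).choose (n + 1) : ℕ) : ℚ) * ((n : ℚ) + 1) =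
              (((M + 1).choose n : ℕ) : ℚ) * ((M : ℚ) + 1 - n) := by
            have h3 := congrArg (Nat.cast (R := ℚ)) h0
            push_cast at h3
            rw [h2] at h3
            linarith
          have hnz : ((n : ℚ) + 1) ≠ 0 := by positivity
          rw [eq_div_iff hnz]
          linarith
        have hPsucc : P (n + 1) = P n * (((k - n : ℕ) : ℚ) / ((M + 2 + k - n - 1 : ℕ) : ℚ)) := by
          rw [hP]
          exact Finset.prod_range_succ _ n
        simp only [hG]
        rw [hPsucc, hc, hb, hck, hd, hmn, hmn1]
        have hnz : ((n : ℚ) + 1) ≠ 0 := by positivity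
        field_simp
        ring
    have hfin := key (min (M + 1) k + 1) le_rfl
    have htriv : min (M + 2 - 1) k = min (M + 1) k := rfl
    rw [htriv, hfin]
    simp only [hG]
    have hzero : (-1 : ℚ) ^ (min (M + 1) k + 1) *
        (((M + 1).choose (min (M + 1) k + 1) : ℕ) : ℚ) * P (min (M + 1) k + 1) *
        ((M + 2 + k - (min (M + 1) k + 1) : ℕ) : ℚ) = 0 := by
      rcases le_or_gt (M + 1) k with h | h
      · rw [min_eq_left h]
        rw [Nat.choose_eq_zero_of_lt (by omega)]
        simp
      · rw [min_eq_right (by omega)]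
        have : P (k + 1) = 0 := by
          rw [hP]
          apply Finset.prod_eq_zero (Finset.self_mem_range_succ k)
          simp
        rw [this]
        ring
    rw [hzero]
    push_cast
    ring
end

section
/- Let f ∈ H_m(𝔹) and let T_f : D_f → H_m(𝔹), u ↦ fu, on the domain D_f = {u ∈ H_m(𝔹) : fu ∈ H_m(𝔹)}. Then every polynomial lies in the domain of the adjoint T_f*, and T_f* z^α = ∑_{0≤β≤α} (ρ_m(α-β)/ρ_m(α)) \overline{f_β} z^{α-β} for every α ∈ ℕⁿ, where f_β are the Taylor coefficients of f. -/
open scoped ComplexConjugate Classical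

/-- The coefficient sequence of the product `f·u` of two formal power series given by their
coefficient sequences. -/
noncomputable def convCoeff {n : ℕ} (f u : (Fin n → ℕ) → ℂ) : (Fin n → ℕ) → ℂ :=
  fun α => ∑ β ∈ Finset.Iic α, f β * u (α - β)

lemma rhoR_pos (m : ℕ) {n : ℕ} (α : Fin n → ℕ) : 0 < rhoR m α := by
  unfold rhoR
  positivity

/-- Let `f ∈ H_m(𝔹)` (identified with its coefficient sequence) and consider the densely
defined multiplication operator `T_f u = fu` on `D_f = {u ∈ H_m(𝔹) : fu ∈ H_m(𝔹)}`.  Then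
each monomial `z^α` lies in the domain of the adjoint `T_f*` and
`T_f* z^α = ∑_{0≤β≤α} (ρ_m(α-β)/ρ_m(α)) conj(f_β) z^{α-β}`; concretely, the coefficient
sequence `v` of the latter satisfies `⟪T_f u, z^α⟫ = ⟪u, v⟫` for all `u ∈ D_f`, where
`⟪u, w⟫ = ∑_γ u_γ conj(w_γ)/ρ_m(γ)`. -/
theorem polynomials_in_adjoint_domain (n m : ℕ) (hm : 1 ≤ m)
    (f : (Fin n → ℕ) → ℂ) (hf : Summable fun α => ‖f α‖ ^ 2 / rhoR m α)
    (α : Fin n → ℕ) :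
    ∀ u : (Fin n → ℕ) → ℂ,
      Summable (fun γ => ‖u γ‖ ^ 2 / rhoR m γ) →
      Summable (fun γ => ‖convCoeff f u γ‖ ^ 2 / rhoR m γ) →
      convCoeff f u α / (rhoR m α : ℂ) =
        ∑' γ, u γ *
          conj (if γ ≤ α then ((rhoR m γ / rhoR m α : ℝ) : ℂ) * conj (f (α - γ)) else 0) /
            (rhoR m γ : ℂ) := by
  intro u _ _
  rw [tsum_eq_sum (s := Finset.Iic α) (by
    intro γ hγ
    simp only [Finset.mem_Iic] at hγ
    rw [if_neg hγ]
    simp)]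
  unfold convCoeff
  rw [Finset.sum_div]
  refine Finset.sum_bij' (fun β _ => α - β) (fun γ _ => α - γ) ?_ ?_ ?_ ?_ ?_
  · intro β hβ
    simp only [Finset.mem_Iic] at hβ ⊢
    intro i; exact Nat.sub_le _ _
  · intro γ hγ
    simp only [Finset.mem_Iic] at hγ ⊢
    intro i; exact Nat.sub_le _ _
  · intro β hβ
    simp only [Finset.mem_Iic] at hβ
    funext i
    exact Nat.sub_sub_self (hβ i)
  · intro γ hγ
    simp only [Finset.mem_Iic] at hγ
    funext i
    exact Nat.sub_sub_self (hγ i)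
  · intro β hβ
    simp only [Finset.mem_Iic] at hβ
    have hle : α - β ≤ α := fun i => Nat.sub_le _ _
    rw [if_pos hle]
    have hab : α - (α - β) = β := by
      funext i; exact Nat.sub_sub_self (hβ i)
    rw [hab]
    have h1 : (rhoR m (α - β) : ℝ) ≠ 0 := (rhoR_pos m _).ne'
    have h2 : (rhoR m α : ℝ) ≠ 0 := (rhoR_pos m α).ne'
    have h1' : ((rhoR m (α - β) : ℝ) : ℂ) ≠ 0 := by exact_mod_cast h1
    have h2' : ((rhoR m α : ℝ) : ℂ) ≠ 0 := by exact_mod_cast h2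
    rw [map_mul, Complex.conj_conj, Complex.conj_ofReal]
    push_cast
    field_simp
end
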